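/- arXiv:1705.06952 — 5 statements merged into one kernel-verified Lean document; each statement's English description precedes it below -/
import Mathlib

section
/- For any positive integer n, the number of isomorphism classes of groups of order n equals 1 if and only if gcd(n, φ(n)) = 1, where φ is Euler's totient function. -/
/-!
If `gcd(n, φ(n)) = 1` then `n` is squarefree, so a group `G` of order `n` is a Z-group and its
commutator subgroup `G'` is cyclic. Conjugation maps `G` into `Aut(G')`, of order `φ(|G'|) ∣ φ(n)`,
so it is trivial and `G'` is central. As `G / G'` is cyclic too, `G` is abelian, and an abelian
Z-group is cyclic.

Conversely, a prime `p` dividing both `n` and `φ(n)` either satisfies `p² ∣ n`, and then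
`C_p × C_p × C_{n/p²}` is not cyclic, or divides `q - 1` for a prime `q ∣ n`, and then
`(C_q ⋊ C_p) × C_{n/pq}` is not even abelian.
-/

/-- The setoid of isomorphism of groups of order `n`. -/
def grpIsoSetoid (n : ℕ) : Setoid {G : GrpCat.{0} // Nat.card G = n} where
  r G H := Nonempty (G.1 ≃* H.1)
  iseqv := ⟨fun _ => ⟨MulEquiv.refl _⟩, fun ⟨e⟩ => ⟨e.symm⟩, fun ⟨e⟩ ⟨f⟩ => ⟨e.trans f⟩⟩

/-- The number of isomorphism classes of groups of order `n`. -/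
noncomputable def groupCount (n : ℕ) : ℕ := Nat.card (Quotient (grpIsoSetoid n))

namespace Nat

theorem squarefree_of_coprime_totient {n : ℕ} (h : n.Coprime n.totient) : Squarefree n := by
  rw [squarefree_iff_prime_squarefree]
  rintro p hp ⟨m, rfl⟩
  have hpφ : p ∣ (p * p * m).totient := by
    rw [mul_assoc, totient_mul_of_prime_of_dvd hp (dvd_mul_right p m)]
    exact dvd_mul_right _ _
  exact hp.one_lt.ne' (eq_one_of_dvd_coprimes h (dvd_mul_of_dvd_left (dvd_mul_right p p) m) hpφ)

theorem totient_eq_prod_primeFactors_of_squarefree {n : ℕ} (hn : Squarefree n) :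
    n.totient = ∏ p ∈ n.primeFactors, (p - 1) := by
  rw [totient_eq_div_primeFactors_mul, prod_primeFactors_of_squarefree hn,
    Nat.div_self hn.ne_zero.bot_lt, one_mul]

theorem exists_prime_dvd_sub_one_of_not_coprime_totient {n : ℕ} (hn : Squarefree n)
    (h : ¬ n.Coprime n.totient) :
    ∃ p q : ℕ, p.Prime ∧ q.Prime ∧ p ∣ q - 1 ∧ p * q ∣ n := by
  obtain ⟨p, hp, hpn, hpφ⟩ := Prime.not_coprime_iff_dvd.mp h
  rw [totient_eq_prod_primeFactors_of_squarefree hn] at hpφ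
  obtain ⟨q, hq, hpq⟩ := (hp.prime.dvd_finsetProd_iff _).mp hpφ
  have hqp := prime_of_mem_primeFactors hq
  have hne : p ≠ q := by
    rintro rfl
    exact not_dvd_of_pos_of_lt (Nat.sub_pos_of_lt hp.one_lt) (Nat.sub_lt hp.pos one_pos) hpq
  exact ⟨p, q, hp, hqp, hpq, ((coprime_primes hp hqp).mpr hne).mul_dvd_of_dvd_of_dvd hpn
    (dvd_of_mem_primeFactors hq)⟩

end Nat

theorem Subgroup.le_center_of_coprime_card_mulAut {G : Type*} [Group G] (N : Subgroup G)
    [N.Normal] (h : (Nat.card G).Coprime (Nat.card (MulAut N))) : N ≤ Subgroup.center G := by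
  intro k hk
  rw [Subgroup.mem_center_iff]
  intro g
  have hg : MulAut.conjNormal (H := N) g = 1 := orderOf_eq_one_iff.mp <|
    Nat.eq_one_of_dvd_coprimes h ((orderOf_map_dvd _ g).trans (_root_.orderOf_dvd_natCard g))
      (_root_.orderOf_dvd_natCard _)
  have hgk : g * k * g⁻¹ = k := by
    simpa [MulAut.conjNormal_apply] using congrArg (fun f : MulAut N => (f ⟨k, hk⟩ : G)) hg
  exact mul_inv_eq_iff_eq_mul.mp hgk

theorem isCyclic_of_coprime_card_totient {G : Type*} [Group G]
    (h : (Nat.card G).Coprime (Nat.card G).totient) : IsCyclic G := by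
  have : Finite G := Nat.finite_of_card_ne_zero (Nat.squarefree_of_coprime_totient h).ne_zero
  have : IsZGroup G := .of_squarefree (Nat.squarefree_of_coprime_totient h)
  have : IsCyclic (commutator G) := IsZGroup.isCyclic_commutator G
  have hcentral : commutator G ≤ Subgroup.center G := by
    refine (commutator G).le_center_of_coprime_card_mulAut (h.coprime_dvd_right ?_)
    rw [IsCyclic.card_mulAut]
    exact Nat.totient_dvd_of_dvd (Subgroup.card_subgroup_dvd_card _)
  let _ : CommGroup G :=
    commGroupOfCyclicCenterQuotient Abelianization.of (Abelianization.ker_of (G := G) ▸ hcentral)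
  exact IsCyclic.of_exponent_eq_card (IsZGroup.exponent_eq_card G)

theorem exists_not_isCyclic_of_dvd {d n : ℕ} (hn : n ≠ 0) (hd : d ∣ n) {G : Type} [Group G]
    (hG : Nat.card G = d) (hcyc : ¬ IsCyclic G) :
    ∃ (H : Type) (_ : Group H), Nat.card H = n ∧ ¬ IsCyclic H := by
  have hd0 : d ≠ 0 := by
    rintro rfl
    exact hn (Nat.eq_zero_of_zero_dvd hd)
  have : NeZero (n / d) := ⟨(Nat.div_ne_zero_iff_of_dvd hd).mpr ⟨hn, hd0⟩⟩
  refine ⟨G × Multiplicative (ZMod (n / d)), inferInstance, ?_,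
    fun _ => hcyc (isCyclic_left_of_prod G (Multiplicative (ZMod (n / d))))⟩
  rw [Nat.card_prod, Nat.card_congr Multiplicative.toAdd, Nat.card_zmod, hG,
    Nat.mul_div_cancel' hd]

theorem not_isCyclic_zmod_prod_self (p : ℕ) [Fact p.Prime] :
    ¬ IsCyclic (Multiplicative (ZMod p) × Multiplicative (ZMod p)) := by
  rw [Group.isCyclic_prod_iff]
  simp [(Fact.out : p.Prime).ne_one]

open Subgroup in
theorem exists_not_isCyclic_of_dvd_sub_one {p q : ℕ} (hp : p.Prime) (hq : q.Prime)
    (hpq : p ∣ q - 1) : ∃ (G : Type) (_ : Group G), Nat.card G = p * q ∧ ¬ IsCyclic G := by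
  have := Fact.mk hp
  have := Fact.mk hq
  obtain ⟨u, hu⟩ : ∃ u : (ZMod q)ˣ, orderOf u = p :=
    exists_prime_orderOf_dvd_card p (by rwa [ZMod.card_units_eq_totient, Nat.totient_prime hq])
  let φ : zpowers u →* MulAut (Multiplicative (ZMod q)) :=
    (MulAutMultiplicative (ZMod q)).symm.toMonoidHom.comp
      (AddAut.mulLeft.comp (zpowers u).subtype)
  refine ⟨Multiplicative (ZMod q) ⋊[φ] zpowers u, inferInstance, ?_, fun hcyc => ?_⟩
  · rw [Nat.card_congr SemidirectProduct.equivProd, Nat.card_prod, Nat.card_zpowers, hu,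
      Nat.card_congr Multiplicative.toAdd, Nat.card_zmod, mul_comm]
  · have hcomm : (.inl (.ofAdd 1) : Multiplicative (ZMod q) ⋊[φ] _) * .inr ⟨u, mem_zpowers u⟩ =
        .inr ⟨u, mem_zpowers u⟩ * .inl (.ofAdd 1) :=
      hcyc.commGroup.mul_comm _ _
    have hfix := congrArg SemidirectProduct.left hcomm
    simp only [SemidirectProduct.mul_left, SemidirectProduct.left_inl, SemidirectProduct.right_inl,
      SemidirectProduct.left_inr, SemidirectProduct.right_inr, map_one, mul_one,
      one_mul] at hfix
    have hu1 : Multiplicative.ofAdd (1 : ZMod q) = Multiplicative.ofAdd ((u : ZMod q) * 1) :=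
      hfix
    rw [Multiplicative.ofAdd.injective.eq_iff, mul_one, eq_comm, Units.val_eq_one] at hu1
    rw [hu1, orderOf_one] at hu
    exact hp.ne_one hu.symm

theorem exists_not_isCyclic_of_not_coprime_totient {n : ℕ} (hn : n ≠ 0)
    (h : ¬ n.Coprime n.totient) : ∃ (G : Type) (_ : Group G), Nat.card G = n ∧ ¬ IsCyclic G := by
  by_cases hsq : Squarefree n
  · obtain ⟨p, q, hp, hq, hpq, hpqn⟩ := Nat.exists_prime_dvd_sub_one_of_not_coprime_totient hsq h
    obtain ⟨G, _, hG, hcyc⟩ := exists_not_isCyclic_of_dvd_sub_one hp hq hpq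
    exact exists_not_isCyclic_of_dvd hn hpqn hG hcyc
  · obtain ⟨p, hp, hppn⟩ := by simpa [Nat.squarefree_iff_prime_squarefree] using hsq
    have := Fact.mk hp
    refine exists_not_isCyclic_of_dvd hn hppn ?_ (not_isCyclic_zmod_prod_self p)
    rw [Nat.card_prod, Nat.card_congr Multiplicative.toAdd, Nat.card_zmod]

theorem groupCount_eq_one_iff {n : ℕ} (hn : n ≠ 0) :
    groupCount n = 1 ↔ ∀ (G : Type) [Group G], Nat.card G = n → IsCyclic G := by
  have : NeZero n := ⟨hn⟩
  have hZ : Nat.card (GrpCat.of (Multiplicative (ZMod n))) = n :=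
    (Nat.card_congr Multiplicative.toAdd).trans (Nat.card_zmod n)
  rw [groupCount, Nat.card_eq_one_iff_unique]
  constructor
  · rintro ⟨_, -⟩ G _ hG
    obtain ⟨e⟩ := Quotient.exact (Subsingleton.elim
      (⟦⟨GrpCat.of G, hG⟩⟧ : Quotient (grpIsoSetoid n)) ⟦⟨GrpCat.of (Multiplicative (ZMod n)), hZ⟩⟧)
    exact e.isCyclic.mpr inferInstance
  · intro hcyc
    refine ⟨⟨Quotient.ind₂ fun G H => Quotient.sound ?_⟩, ⟨⟦⟨_, hZ⟩⟧⟩⟩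
    have := hcyc G.1 G.2
    have := hcyc H.1 H.2
    exact ⟨mulEquivOfCyclicCardEq (G.2.trans H.2.symm)⟩

theorem stmt_0 (n : ℕ) (hn : 0 < n) :
    groupCount n = 1 ↔ Nat.gcd n (Nat.totient n) = 1 := by
  rw [groupCount_eq_one_iff hn.ne']
  refine ⟨fun hcyc => by_contra fun h => ?_, fun h G _ hG => ?_⟩
  · obtain ⟨G, _, hG, hG_noncyclic⟩ := exists_not_isCyclic_of_not_coprime_totient hn.ne' h
    exact hG_noncyclic (hcyc G hG)
  · exact isCyclic_of_coprime_card_totient (hG ▸ h)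
end

section
/- Let n = p_1^{a_1} ··· p_t^{a_t} with distinct primes p_i. Every group of order n is nilpotent if and only if for all i, j and all k with 1 ≤ k ≤ a_i, p_i^k is not congruent to 1 modulo p_j. -/
/-
Strong induction on `|G|`: subgroups and quotients have orders dividing `|G|`, so they inherit
the arithmetic condition and are nilpotent.

If `G` has a proper nontrivial normal subgroup `N`, then `N` is nilpotent, so it contains a
nontrivial normal `q`-subgroup `Q` of `G`; lifting the normal Sylow `q`-subgroup of the nilpotent
group `G ⧸ Q` gives a normal Sylow `q`-subgroup `P` of `G`. The group `G ⧸ P` has order prime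
to `q` and acts by conjugation on the `q`-group `Z(P)`; an element of prime order `r` acting
nontrivially would, by counting its fixed points, give `q ^ k ≡ 1 [MOD r]` with `q ^ k ∣ |Z(P)|`.
So `Z(P)` is central and `G ⧸ Z(G)` is nilpotent.

If `G` is simple, the normalizer condition in its nilpotent maximal subgroups forces distinct
maximal subgroups to meet trivially. They are then self-normalizing, so the `[G : M]` conjugates
of a maximal subgroup `M` contain `|G| - [G : M]` nonidentity elements, at least half of `G` but
not all of it; two conjugacy classes of maximal subgroups would need more than `|G| - 1`. Hence
some element lies in no maximal subgroup and `G` is cyclic.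

Conversely, if `p ^ k ≡ 1 [MOD q]`, an element of order `q` of `𝔽_{p^k}ˣ` acting on `𝔽_{p^k}`
gives a non-nilpotent group of order `p ^ k * q`; a cyclic factor brings the order up to `n`.
-/

open Subgroup Pointwise MulAction

universe u

def Nat.PrimePowersNotOneMod (n : ℕ) : Prop :=
  ∀ ⦃p q k : ℕ⦄, p.Prime → q.Prime → q ∣ n → 0 < k → p ^ k ∣ n → ¬ p ^ k ≡ 1 [MOD q]

namespace Nat.PrimePowersNotOneMod

theorem of_dvd {m n : ℕ} (h : n.PrimePowersNotOneMod) (hmn : m ∣ n) : m.PrimePowersNotOneMod :=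
  fun _ _ _ hp hq hqm hk hpm => h hp hq (hqm.trans hmn) hk (hpm.trans hmn)

end Nat.PrimePowersNotOneMod

theorem Nat.primePowersNotOneMod_iff {n : ℕ} (hn : n ≠ 0) :
    n.PrimePowersNotOneMod ↔ ∀ p ∈ n.primeFactors, ∀ q ∈ n.primeFactors,
      ∀ k : ℕ, 1 ≤ k → k ≤ n.factorization p → ¬ (p ^ k ≡ 1 [MOD q]) := by
  constructor
  · intro h p hp q hq k hk hkp
    exact h (prime_of_mem_primeFactors hp) (prime_of_mem_primeFactors hq)
      (dvd_of_mem_primeFactors hq) hk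
      ((prime_of_mem_primeFactors hp).pow_dvd_iff_le_factorization hn |>.mpr hkp)
  · intro h p q k hp hq hqn hk hpn
    have hpn' : p ∣ n := (dvd_pow_self p hk.ne').trans hpn
    exact h p (mem_primeFactors.mpr ⟨hp, hpn', hn⟩) q (mem_primeFactors.mpr ⟨hq, hqn, hn⟩) k hk
      ((hp.pow_dvd_iff_le_factorization hn).mp hpn)

theorem MulAut.exists_pow_modEq_one_of_orderOf_eq {A : Type*} [Group A] [Finite A]
    {q r c : ℕ} (hq : q.Prime) [hr : Fact r.Prime] (hqr : q ≠ r) (hA : Nat.card A = q ^ c)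
    {α : MulAut A} (hα : orderOf α = r) : ∃ k, 0 < k ∧ k ≤ c ∧ q ^ k ≡ 1 [MOD r] := by
  have : Fact q.Prime := ⟨hq⟩
  let F := FixedPoints.subgroup (zpowers α) A
  obtain ⟨e, he⟩ := IsPGroup.iff_card.mp ((IsPGroup.of_card hA).to_subgroup F)
  have hmod : q ^ c ≡ q ^ e [MOD r] := by
    have hZ : IsPGroup r (zpowers α) := IsPGroup.of_card (by rw [Nat.card_zpowers, hα, pow_one])
    rw [← hA, ← he]
    exact hZ.card_modEq_card_fixedPoints A
  have hF : F ≠ ⊤ := by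
    intro hF
    refine hr.out.one_lt.ne' (hα ▸ orderOf_eq_one_iff.mpr (MulEquiv.ext fun a => ?_))
    exact (hF ▸ mem_top a : a ∈ F) ⟨α, mem_zpowers α⟩
  have hec : e < c := by
    have hlt : Nat.card F < Nat.card A :=
      (card_le_card_group F).lt_of_ne fun h => hF (eq_top_of_card_eq F h)
    rw [he, hA] at hlt
    exact (Nat.pow_lt_pow_iff_right hq.one_lt).mp hlt
  refine ⟨c - e, by omega, by omega, Nat.ModEq.cancel_right_of_coprime (c := q ^ e) ?_ ?_⟩
  · exact Nat.Coprime.pow_right _ ((Nat.coprime_primes hr.out hq).mpr hqr.symm)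
  · rwa [← pow_add, Nat.sub_add_cancel hec.le, one_mul]

theorem Sylow.inf_centralizer_le_center {G : Type*} [Group G] [Finite G] {q : ℕ} [hq : Fact q.Prime]
    (P : Sylow q G) [(P : Subgroup G).Normal] (hG : (Nat.card G).PrimePowersNotOneMod) :
    (P : Subgroup G) ⊓ centralizer (P : Subgroup G) ≤ center G := by
  set Z := (P : Subgroup G) ⊓ centralizer (P : Subgroup G)
  have : Z.Normal := normal_inf_normal _ _
  let φ : G →* MulAut Z := MulAut.conjNormal
  suffices hφ : ∀ g, φ g = 1 by
    intro z hz
    refine mem_center_iff.mpr fun g => ?_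
    have hgz : g * z * g⁻¹ = z := by
      simpa [φ] using congrArg Subtype.val (DFunLike.congr_fun (hφ g) ⟨z, hz⟩)
    exact (eq_mul_inv_iff_mul_eq.mp hgz.symm).symm
  by_contra! ⟨g, hg⟩
  have hker : (P : Subgroup G) ≤ φ.ker := fun s hs => by
    ext z
    simp [φ, z.2.2 s hs]
  -- the action of `G` on `Z` factors through `G ⧸ P`, whose order is prime to `q`
  have hrange : Nat.card φ.range ∣ P.index := index_ker φ ▸ index_dvd_of_le hker
  have hrange1 : Nat.card φ.range ≠ 1 := fun h1 =>
    hg (mem_bot.mp (card_eq_one.mp h1 ▸ ⟨g, rfl⟩))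
  obtain ⟨r, hr, hrdvd⟩ := Nat.exists_prime_and_dvd hrange1
  have : Fact r.Prime := ⟨hr⟩
  obtain ⟨α, hα⟩ := exists_prime_orderOf_dvd_card' r hrdvd
  have hqr : q ≠ r := by
    rintro rfl
    exact P.not_dvd_index (hrdvd.trans hrange)
  obtain ⟨c, hc⟩ := IsPGroup.iff_card.mp (P.2.to_le inf_le_left : IsPGroup q Z)
  obtain ⟨k, hk, hkc, hmod⟩ :=
    MulAut.exists_pow_modEq_one_of_orderOf_eq hq.out hqr hc ((orderOf_coe α).trans hα)
  exact hG hq.out hr (hrdvd.trans (hrange.trans P.index_dvd_card)) hk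
    ((pow_dvd_pow q hkc).trans (hc ▸ card_subgroup_dvd_card Z)) hmod

theorem center_ne_bot_of_normal_sylow {G : Type*} [Group G] [Finite G] {q : ℕ} [Fact q.Prime]
    (P : Sylow q G) [(P : Subgroup G).Normal] (hP : (P : Subgroup G) ≠ ⊥)
    (hG : (Nat.card G).PrimePowersNotOneMod) : center G ≠ ⊥ := by
  have : Nontrivial P := (nontrivial_iff_ne_bot _).mpr hP
  have := P.2.center_nontrivial
  obtain ⟨z, hz⟩ := exists_ne (1 : center P)
  refine (nontrivial_iff_ne_bot _).mp ⟨⟨⟨z, P.inf_centralizer_le_center hG ?_⟩, 1, ?_⟩⟩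
  · exact ⟨z.1.2, fun s hs => congrArg Subtype.val (mem_center_iff.mp z.2 ⟨s, hs⟩)⟩
  · intro h
    exact hz (by ext; simpa using congrArg Subtype.val h)

namespace Subgroup

variable {G : Type*} [Group G] [Finite G]

theorem card_lt_card_of_ne_top {H : Subgroup G} (hH : H ≠ ⊤) : Nat.card H < Nat.card G :=
  (card_le_card_group H).lt_of_ne fun h => hH (eq_top_of_card_eq H h)

theorem card_quotient_lt_card_of_ne_bot {H : Subgroup G} (hH : H ≠ ⊥) :
    Nat.card (G ⧸ H) < Nat.card G := by
  rw [← H.card_mul_index]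
  exact lt_mul_of_one_lt_left Nat.card_pos ((one_lt_card_iff_ne_bot H).mpr hH)

theorem exists_normal_sylow_le_of_isNilpotent_quotient {q : ℕ} [Fact q.Prime] {Q : Subgroup G}
    [Q.Normal] (hQ : IsPGroup q Q) [Group.IsNilpotent (G ⧸ Q)] :
    ∃ P : Sylow q G, (P : Subgroup G).Normal ∧ Q ≤ P := by
  obtain ⟨Pbar⟩ : Nonempty (Sylow q (G ⧸ Q)) := inferInstance
  let S := (Pbar : Subgroup (G ⧸ Q)).comap (QuotientGroup.mk' Q)
  have hS : IsPGroup q S :=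
    Pbar.2.comap_of_ker_isPGroup _ (by rwa [QuotientGroup.ker_mk'])
  have hSindex : ¬ q ∣ S.index := by
    rw [index_comap_of_surjective _ (QuotientGroup.mk'_surjective Q)]
    exact Pbar.not_dvd_index
  refine ⟨hS.toSylow hSindex, ?_, ?_⟩
  · rw [IsPGroup.toSylow_coe]
    exact Normal.comap inferInstance _
  · rw [IsPGroup.toSylow_coe, ← QuotientGroup.ker_mk' Q]
    exact MonoidHom.ker_le_comap _ _

theorem exists_isPGroup_normal_ne_bot {N : Subgroup G} [N.Normal] [Group.IsNilpotent N]
    (hN : N ≠ ⊥) : ∃ q, q.Prime ∧ ∃ Q : Subgroup G, Q.Normal ∧ IsPGroup q Q ∧ Q ≠ ⊥ := by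
  set q := (Nat.card N).minFac
  have hq : Fact q.Prime := ⟨Nat.minFac_prime ((one_lt_card_iff_ne_bot N).mpr hN).ne'⟩
  obtain ⟨P⟩ : Nonempty (Sylow q N) := inferInstance
  -- a normal Sylow subgroup of `N` is characteristic in `N`, hence normal in `G`
  have := P.characteristic_of_normal inferInstance
  refine ⟨q, hq.out, (P : Subgroup N).map N.subtype, inferInstance, P.2.map _, ?_⟩
  rw [Ne, map_eq_bot_iff_of_injective _ N.subtype_injective]
  exact P.ne_bot_of_dvd_card (Nat.minFac_dvd _)

end Subgroup

theorem Group.isNilpotent_of_normal_of_ne_bot_of_ne_top {G : Type u} [Group G] [Finite G]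
    (hG : (Nat.card G).PrimePowersNotOneMod)
    (ih : ∀ (H : Type u) [Group H], Nat.card H ∣ Nat.card G → Nat.card H < Nat.card G →
      Group.IsNilpotent H)
    {N : Subgroup G} [N.Normal] (hbot : N ≠ ⊥) (htop : N ≠ ⊤) : Group.IsNilpotent G := by
  have : Group.IsNilpotent N := ih N (card_subgroup_dvd_card N) (card_lt_card_of_ne_top htop)
  obtain ⟨q, hq, Q, hQn, hQ, hQbot⟩ := exists_isPGroup_normal_ne_bot hbot
  have : Fact q.Prime := ⟨hq⟩
  have : Group.IsNilpotent (G ⧸ Q) :=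
    ih _ Q.index_dvd_card (card_quotient_lt_card_of_ne_bot hQbot)
  obtain ⟨P, hPn, hQP⟩ := exists_normal_sylow_le_of_isNilpotent_quotient hQ
  have hZ : center G ≠ ⊥ :=
    center_ne_bot_of_normal_sylow P (fun h => hQbot (le_bot_iff.mp (h ▸ hQP))) hG
  exact Group.of_quotient_center_nilpotent
    (ih _ (center G).index_dvd_card (card_quotient_lt_card_of_ne_bot hZ))

namespace Subgroup

variable {G : Type*} [Group G]

theorem exists_mem_normalizer_notMem_of_lt {H I : Subgroup G} [Group.IsNilpotent H]
    (h : I < H) : ∃ x ∈ H, x ∈ normalizer (I : Set G) ∧ x ∉ I := by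
  have hlt : I.subgroupOf H < ⊤ :=
    lt_top_iff_ne_top.mpr fun e => h.not_ge (subgroupOf_eq_top.mp e)
  obtain ⟨x, hxN, hxI⟩ := SetLike.exists_of_lt (Group.normalizerCondition_of_isNilpotent _ hlt)
  rw [← subgroupOf_normalizer_eq h.le] at hxN
  exact ⟨x, x.2, hxN, hxI⟩

theorem ncard_orbit_conjAct (H : Subgroup G) :
    (orbit (ConjAct G) H).ncard = (normalizer (H : Set G)).index := by
  have : (stabilizer (ConjAct G) H).comap ConjAct.toConjAct.toMonoidHom =
      normalizer (H : Set G) :=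
    ext fun _ => conjAct_pointwise_smul_iff
  rw [← index_stabilizer, ← this]
  exact (index_comap_of_surjective (H := stabilizer (ConjAct G) H)
    (f := ConjAct.toConjAct.toMonoidHom) ConjAct.toConjAct.surjective).symm

theorem _root_.IsCoatom.conjAct_smul {M : Subgroup G} (hM : IsCoatom M) (g : ConjAct G) :
    IsCoatom (g • M) :=
  ((MulEquiv.mapSubgroup (MulDistribMulAction.toMulEquiv G g)).isCoatom_iff M).mpr hM

section Finite

variable [Finite G]

theorem inf_eq_bot_of_isCoatom (hsimple : ∀ N : Subgroup G, N.Normal → N = ⊥ ∨ N = ⊤)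
    (hproper : ∀ H : Subgroup G, H ≠ ⊤ → Group.IsNilpotent H) {M₁ M₂ : Subgroup G}
    (h₁ : IsCoatom M₁) (h₂ : IsCoatom M₂) (hne : M₁ ≠ M₂) : M₁ ⊓ M₂ = ⊥ := by
  suffices ∀ I : Subgroup G, ∀ M₁ M₂ : Subgroup G, IsCoatom M₁ → IsCoatom M₂ → M₁ ≠ M₂ →
      M₁ ⊓ M₂ = I → I = ⊥ from this _ M₁ M₂ h₁ h₂ hne rfl
  intro I
  induction I using WellFoundedGT.induction with | _ I ih => ?_
  rintro M₁ M₂ h₁ h₂ hne rfl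
  by_contra hbot
  have : Group.IsNilpotent M₁ := hproper M₁ h₁.1
  have : Group.IsNilpotent M₂ := hproper M₂ h₂.1
  obtain ⟨x₁, hx₁M, hx₁N, hx₁I⟩ := exists_mem_normalizer_notMem_of_lt
    (inf_lt_left.mpr fun hle => hne ((h₁.le_iff.mp hle).resolve_left h₂.1).symm)
  obtain ⟨x₂, hx₂M, hx₂N, hx₂I⟩ := exists_mem_normalizer_notMem_of_lt
    (inf_lt_right.mpr fun hle => hne ((h₂.le_iff.mp hle).resolve_left h₁.1))
  have hN : normalizer ((M₁ ⊓ M₂ : Subgroup G) : Set G) ≠ ⊤ := fun h => by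
    rcases hsimple _ (normalizer_eq_top_iff.mp h) with h | h
    · exact hbot h
    · exact h₁.1 (top_le_iff.mp (h ▸ inf_le_left))
  -- a maximal `M₃ ≥ normalizer (M₁ ⊓ M₂)` contains `x₂ ∈ M₂ \ M₁`, so `M₃ ≠ M₁`,
  -- and `x₁ ∈ (M₃ ⊓ M₁) \ (M₁ ⊓ M₂)`
  obtain ⟨M₃, h₃, hNM₃⟩ := (eq_top_or_exists_le_coatom _).resolve_left hN
  by_cases h₃₁ : M₃ = M₁
  · exact hx₂I ⟨h₃₁ ▸ hNM₃ hx₂N, hx₂M⟩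
  · have hlt : M₁ ⊓ M₂ < M₃ ⊓ M₁ := SetLike.lt_iff_le_and_exists.mpr
      ⟨le_inf (le_normalizer.trans hNM₃) inf_le_left, x₁, mem_inf.mpr ⟨hNM₃ hx₁N, hx₁M⟩, hx₁I⟩
    exact hbot (le_bot_iff.mp (ih _ hlt M₃ M₁ h₃ h₁ h₃₁ rfl ▸ hlt.le))

open Finset in
theorem sum_card_sub_one_eq (S : Finset (Subgroup G))
    (hdisj : ∀ L₁ ∈ S, ∀ L₂ ∈ S, L₁ ≠ L₂ → L₁ ⊓ L₂ = ⊥) (hcover : ∀ x : G, x ≠ 1 → ∃ L ∈ S, x ∈ L) :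
    ∑ L ∈ S, (Nat.card L - 1) = Nat.card G - 1 := by
  classical
  have : Fintype G := Fintype.ofFinite G
  let E : Subgroup G → Finset G := fun L => (univ.filter (· ∈ L)).erase 1
  have hmemE : ∀ L x, x ∈ E L ↔ x ≠ 1 ∧ x ∈ L := by simp [E]
  have hE : ∀ L, #(E L) = Nat.card L - 1 := by
    intro L
    rw [card_erase_of_mem (by simp [L.one_mem]), ← Fintype.card_subtype, Nat.card_eq_fintype_card]
  have hunion : S.biUnion E = univ.erase 1 := by
    ext x
    simp only [mem_biUnion, hmemE, mem_erase, mem_univ, and_true]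
    refine ⟨fun ⟨_, _, hx, _⟩ => hx, fun hx => ?_⟩
    obtain ⟨L, hL, hxL⟩ := hcover x hx
    exact ⟨L, hL, hx, hxL⟩
  rw [← sum_congr rfl fun L _ => hE L, ← card_biUnion, hunion, card_erase_of_mem (mem_univ 1),
    card_univ, Nat.card_eq_fintype_card]
  refine fun L₁ h₁ L₂ h₂ hne => disjoint_left.mpr fun x hx₁ hx₂ => ?_
  rw [hmemE] at hx₁ hx₂
  exact hx₁.1 (mem_bot.mp (hdisj L₁ h₁ L₂ h₂ hne ▸ mem_inf.mpr ⟨hx₁.2, hx₂.2⟩))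

theorem sum_card_sub_one_orbit_conjAct_add_index (M : Subgroup G)
    (hM : normalizer (M : Set G) = M) [Fintype (orbit (ConjAct G) M)] :
    ∑ L ∈ (orbit (ConjAct G) M).toFinset, (Nat.card L - 1) + M.index = Nat.card G := by
  have hcard : ∀ L ∈ (orbit (ConjAct G) M).toFinset, Nat.card L - 1 = Nat.card M - 1 := by
    intro L hL
    obtain ⟨g, rfl⟩ := Set.mem_toFinset.mp hL
    rw [Nat.card_congr (equivSMul g M).toEquiv.symm]
  rw [Finset.sum_congr rfl hcard, Finset.sum_const, smul_eq_mul, Set.toFinset_card,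
    ← Nat.card_eq_fintype_card, Nat.card_coe_set_eq, ncard_orbit_conjAct, hM, ← M.card_mul_index,
    ← Nat.mul_succ, Nat.succ_eq_add_one, Nat.sub_add_cancel Nat.card_pos, mul_comm]

open Finset in
theorem exists_ne_one_forall_isCoatom_notMem [Nontrivial G]
    (hdisj : ∀ M₁ M₂ : Subgroup G, IsCoatom M₁ → IsCoatom M₂ → M₁ ≠ M₂ → M₁ ⊓ M₂ = ⊥)
    (hself : ∀ M : Subgroup G, IsCoatom M → normalizer (M : Set G) = M) :
    ∃ x : G, x ≠ 1 ∧ ∀ M : Subgroup G, IsCoatom M → x ∉ M := by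
  classical
  have : Fintype (Subgroup G) := Fintype.ofFinite _
  by_contra! hcover
  let C : Finset (Subgroup G) := univ.filter IsCoatom
  have hC : ∑ L ∈ C, (Nat.card L - 1) = Nat.card G - 1 := by
    refine sum_card_sub_one_eq C (fun L₁ h₁ L₂ h₂ => hdisj L₁ L₂ (mem_filter.mp h₁).2
      (mem_filter.mp h₂).2) fun x hx => ?_
    obtain ⟨L, hL, hxL⟩ := hcover x hx
    exact ⟨L, mem_filter.mpr ⟨mem_univ L, hL⟩, hxL⟩
  let O : Subgroup G → Finset (Subgroup G) := fun M => (orbit (ConjAct G) M).toFinset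
  have hOC : ∀ M, IsCoatom M → O M ⊆ C := fun M hM L hL => by
    obtain ⟨g, rfl⟩ := Set.mem_toFinset.mp hL
    exact mem_filter.mpr ⟨mem_univ _, hM.conjAct_smul g⟩
  -- each conjugacy class of maximal subgroups covers at least half of `G`, but not all of it
  have hO : ∀ M, IsCoatom M → ∑ L ∈ O M, (Nat.card L - 1) + M.index = Nat.card G ∧
      2 ≤ M.index ∧ 2 * M.index ≤ Nat.card G := by
    intro M hM
    have hMbot : M ≠ ⊥ := fun h => hM.1 <| by
      rw [← hself M hM, h]
      exact normalizer_eq_top_iff.mpr inferInstance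
    refine ⟨sum_card_sub_one_orbit_conjAct_add_index M (hself M hM),
      one_lt_index_of_ne_top hM.1, ?_⟩
    rw [← M.card_mul_index]
    exact Nat.mul_le_mul_right _ ((one_lt_card_iff_ne_bot M).mpr hMbot)
  obtain ⟨x, hx⟩ := exists_ne (1 : G)
  obtain ⟨M, hM, -⟩ := hcover x hx
  have := hO M hM
  by_cases hall : C ⊆ O M
  · rw [(hOC M hM).antisymm hall] at this
    omega
  · obtain ⟨M', hM'C, hM'O⟩ := not_subset.mp hall
    have hM' : IsCoatom M' := (mem_filter.mp hM'C).2
    have hdisjO : Disjoint (O M) (O M') := by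
      rw [← disjoint_coe, Set.coe_toFinset, Set.coe_toFinset]
      refine (orbit.eq_or_disjoint M M').resolve_left fun h => hM'O ?_
      exact Set.mem_toFinset.mpr (h ▸ mem_orbit_self M')
    have hle := sum_le_sum_of_subset (f := fun L : Subgroup G => Nat.card L - 1)
      (union_subset (hOC M hM) (hOC M' hM'))
    rw [sum_union hdisjO] at hle
    have := hO M' hM'
    omega

end Finite

end Subgroup

theorem Group.isNilpotent_of_simple_of_forall_ne_top {G : Type*} [Group G] [Finite G]
    (hsimple : ∀ N : Subgroup G, N.Normal → N = ⊥ ∨ N = ⊤)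
    (hproper : ∀ H : Subgroup G, H ≠ ⊤ → Group.IsNilpotent H) : Group.IsNilpotent G := by
  by_contra hG
  rcases subsingleton_or_nontrivial G with _ | _
  · exact hG Group.isNilpotent_of_subsingleton
  have hzpowers : ∀ x : G, zpowers x ≠ ⊤ := fun x hx => hG <| by
    have : IsCyclic G := isCyclic_iff_exists_zpowers_eq_top.mpr ⟨x, hx⟩
    let := IsCyclic.commGroup (α := G)
    exact CommGroup.isNilpotent
  have hself : ∀ M : Subgroup G, IsCoatom M → normalizer (M : Set G) = M := by
    intro M hM
    refine (hM.le_iff.mp le_normalizer).resolve_left fun hN => ?_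
    rcases hsimple M (normalizer_eq_top_iff.mp hN) with rfl | hM'
    · obtain ⟨x, hx⟩ := exists_ne (1 : G)
      exact hzpowers x (hM.2 _ (bot_lt_iff_ne_bot.mpr (zpowers_ne_bot.mpr hx)))
    · exact hM.1 hM'
  obtain ⟨x, -, hx⟩ :=
    exists_ne_one_forall_isCoatom_notMem (fun _ _ => inf_eq_bot_of_isCoatom hsimple hproper) hself
  obtain ⟨M, hM, hxM⟩ := (eq_top_or_exists_le_coatom (zpowers x)).resolve_left (hzpowers x)
  exact hx M hM (hxM (mem_zpowers x))

theorem Group.isNilpotent_of_primePowersNotOneMod {G : Type u} [Group G] [Finite G]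
    (hG : (Nat.card G).PrimePowersNotOneMod) : Group.IsNilpotent G := by
  induction hn : Nat.card G using Nat.strong_induction_on generalizing G with | _ n ih => ?_
  subst hn
  have ih' : ∀ (H : Type u) [Group H], Nat.card H ∣ Nat.card G → Nat.card H < Nat.card G →
      Group.IsNilpotent H := fun H _ hdvd hlt =>
    have : Finite H := Nat.finite_of_card_ne_zero (ne_zero_of_dvd_ne_zero Nat.card_pos.ne' hdvd)
    ih _ hlt (hG.of_dvd hdvd) rfl
  by_cases hN : ∃ N : Subgroup G, N.Normal ∧ N ≠ ⊥ ∧ N ≠ ⊤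
  · obtain ⟨N, _, hbot, htop⟩ := hN
    exact Group.isNilpotent_of_normal_of_ne_bot_of_ne_top hG ih' hbot htop
  · push Not at hN
    refine Group.isNilpotent_of_simple_of_forall_ne_top (fun N hN' => ?_)
      fun H hH => ih' H (card_subgroup_dvd_card H) (card_lt_card_of_ne_top hH)
    exact or_iff_not_imp_left.mpr (hN N hN')

theorem SemidirectProduct.not_isNilpotent {N H : Type*} [Group N] [Group H] [Finite N] [Finite H]
    {q : ℕ} [Fact q.Prime] (hH : IsPGroup q H) (hN : (Nat.card N).Coprime q)
    {φ : H →* MulAut N} (hφ : φ ≠ 1) : ¬ Group.IsNilpotent (N ⋊[φ] H) := by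
  intro hnil
  have : Finite (N ⋊[φ] H) := Finite.of_equiv _ equivProd.symm
  obtain ⟨P, hP⟩ :=
    (hH.of_surjective _ (inr : H →* N ⋊[φ] H).rangeRestrict_surjective).exists_le_sylow
  have : (inl : N →* N ⋊[φ] H).range.Normal := range_inl_eq_ker_rightHom (φ := φ) ▸ inferInstance
  -- `inl N` and the normal Sylow `q`-subgroup have coprime orders, so they commute elementwise
  have hdisj : Disjoint (inl : N →* N ⋊[φ] H).range P := by
    obtain ⟨a, ha⟩ := IsPGroup.iff_card.mp P.2
    refine Subgroup.disjoint_of_coprime_natCard ?_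
    rw [ha, ← Nat.card_congr (MonoidHom.ofInjective inl_injective).toEquiv]
    exact hN.pow_right a
  refine hφ (MonoidHom.ext fun h => MulEquiv.ext fun n => inl_injective (φ := φ) ?_)
  have hc := commute_of_normal_of_disjoint _ (P : Subgroup (N ⋊[φ] H)) this inferInstance hdisj
    (inl n) (inr h) ⟨n, rfl⟩ (hP ⟨h, rfl⟩)
  rw [inl_aut, ← hc.eq, mul_assoc, ← map_mul, mul_inv_cancel, map_one, mul_one]
  rfl

theorem exists_card_eq_not_isNilpotent {p q k : ℕ} (hp : p.Prime) (hq : q.Prime) (hk : k ≠ 0)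
    (hmod : p ^ k ≡ 1 [MOD q]) :
    ∃ (G : Type) (_ : Group G), Nat.card G = p ^ k * q ∧ ¬ Group.IsNilpotent G := by
  have : Fact p.Prime := ⟨hp⟩
  have : Fact q.Prime := ⟨hq⟩
  let F := GaloisField p k
  have hF : Nat.card F = p ^ k := GaloisField.card p k hk
  have hqF : q ∣ Nat.card Fˣ := by
    rw [Nat.card_units, hF]
    exact (Nat.modEq_iff_dvd' (Nat.one_le_pow _ _ hp.pos)).mp hmod.symm
  obtain ⟨u, hu⟩ := exists_prime_orderOf_dvd_card' (G := Fˣ) q hqF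
  -- `zpowers u` acting on the additive group of `F` by multiplication
  let φ : zpowers u →* MulAut (Multiplicative F) :=
    ((MulAutMultiplicative F).symm.toMonoidHom.comp (DistribMulAction.toAddAut Fˣ F)).comp
      (zpowers u).subtype
  have hφ : φ ≠ 1 := fun h => by
    have h1 : Multiplicative.ofAdd ((u : F) * 1) = Multiplicative.ofAdd 1 :=
      DFunLike.congr_fun (DFunLike.congr_fun h ⟨u, mem_zpowers u⟩) (Multiplicative.ofAdd 1)
    have hu1 : u = 1 := Units.ext (by simpa using h1)
    exact hq.one_lt.ne' (by rw [← hu, hu1, orderOf_one])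
  refine ⟨_ ⋊[φ] _, inferInstance, ?_, SemidirectProduct.not_isNilpotent (q := q) ?_ ?_ hφ⟩
  · rw [SemidirectProduct.card, Nat.card_zpowers, hu]
    exact congrArg (· * q) hF
  · exact IsPGroup.of_card (p := q) (n := 1) (by rw [Nat.card_zpowers, hu, pow_one])
  · exact hF ▸ hmod.gcd_eq.trans (Nat.gcd_one_left q)

theorem Nat.PrimePowersNotOneMod.of_forall_isNilpotent {n : ℕ}
    (h : ∀ (G : Type) [Group G], Nat.card G = n → Group.IsNilpotent G) :
    n.PrimePowersNotOneMod := by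
  intro p q k hp hq hqn hk hpn hmod
  obtain ⟨G₀, _, hG₀, hnil⟩ := exists_card_eq_not_isNilpotent hp hq hk.ne' hmod
  obtain ⟨m, rfl⟩ := Nat.Coprime.mul_dvd_of_dvd_of_dvd
    (hmod.gcd_eq.trans (Nat.gcd_one_left q)) hpn hqn
  have := h (G₀ × Multiplicative (ZMod m))
    (by rw [Nat.card_prod, hG₀, Nat.card_congr Multiplicative.toAdd, Nat.card_zmod])
  exact hnil (Group.nilpotent_of_surjective (MonoidHom.fst G₀ (Multiplicative (ZMod m)))
    Prod.fst_surjective)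

theorem stmt_9 (n : ℕ) (hn : 0 < n) :
    (∀ (G : Type) [Group G], Nat.card G = n → Group.IsNilpotent G) ↔
      ∀ p ∈ n.primeFactors, ∀ q ∈ n.primeFactors,
        ∀ k : ℕ, 1 ≤ k → k ≤ n.factorization p → ¬ (p ^ k ≡ 1 [MOD q]) := by
  rw [← Nat.primePowersNotOneMod_iff hn.ne']
  refine ⟨Nat.PrimePowersNotOneMod.of_forall_isNilpotent, fun h G _ hG => ?_⟩
  have : Finite G := Nat.finite_of_card_ne_zero (hG ▸ hn.ne')
  exact Group.isNilpotent_of_primePowersNotOneMod (hG ▸ h)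
end

section
/- Let G be a finite group and P a Sylow p-subgroup of G such that P is contained in the center of its normalizer N_G(P). Then G has a normal p-complement, i.e., a normal subgroup H with order coprime to p and index equal to the order of P. -/
/-! The transfer `G →* P` to a Sylow subgroup contained in the centre of its normalizer
restricts to `x ↦ x ^ [G : P]` on `P`, an automorphism since `[G : P]` is prime to `p`;
its kernel is therefore a normal complement of `P`. -/

namespace Subgroup

theorem le_centralizer_of_subgroupOf_le_center {G : Type*} [Group G] {H K : Subgroup G}
    (hHK : H ≤ K) (h : H.subgroupOf K ≤ center K) : K ≤ centralizer H := by
  intro k hk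
  rw [mem_centralizer_iff]
  intro g hg
  have hg_central : (⟨g, hHK hg⟩ : K) ∈ center K := h hg
  exact (congrArg Subtype.val (mem_center_iff.mp hg_central ⟨k, hk⟩)).symm

end Subgroup

theorem stmt_10 (G : Type) [Group G] [Finite G] (p : ℕ) [Fact p.Prime]
    (P : Sylow p G)
    (hP : (P : Subgroup G).subgroupOf (Subgroup.normalizer ((P : Subgroup G) : Set G)) ≤
      Subgroup.center (Subgroup.normalizer ((P : Subgroup G) : Set G))) :
    ∃ H : Subgroup G, H.Normal ∧ Nat.Coprime (Nat.card H) p ∧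
      H.index = Nat.card (P : Subgroup G) := by
  have hN : Subgroup.normalizer ((P : Subgroup G) : Set G) ≤ Subgroup.centralizer (P : Set G) :=
    Subgroup.le_centralizer_of_subgroupOf_le_center Subgroup.le_normalizer hP
  refine ⟨(MonoidHom.transferSylow P hN).ker, inferInstance, ?_,
    (MonoidHom.ker_transferSylow_isComplement' P hN).symm.index_eq_card⟩
  exact ((Fact.out : p.Prime).coprime_iff_not_dvd.mpr
    (MonoidHom.not_dvd_card_ker_transferSylow P hN)).symm
end

section
/- Every group of square-free order is supersolvable. -/
/-!
A group of square-free order has Sylow subgroups of prime order, so it is a Z-group (all Sylow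
subgroups cyclic). In a finite Z-group both the commutator subgroup and the abelianization are
cyclic, so `⊥ ≤ ⁅G, G⁆ ≤ G` is already a normal series with cyclic factors.
-/

/-- A group is supersolvable if it has a chain of subgroups from `⊥` to `⊤`,
each normal in the whole group, with successive quotients cyclic. -/
def IsSupersolvable (G : Type*) [Group G] : Prop :=
  ∃ (k : ℕ) (s : Fin (k + 1) → Subgroup G) (hnorm : ∀ i, (s i).Normal),
    s 0 = ⊥ ∧ s (Fin.last k) = ⊤ ∧
      ∀ i : Fin k, s i.castSucc ≤ s i.succ ∧
        (letI := (hnorm i.castSucc).subgroupOf (s i.succ)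
         IsCyclic ((s i.succ) ⧸ (s i.castSucc).subgroupOf (s i.succ)))

theorem Subgroup.isCyclic_quotient_subgroupOf {G : Type*} [Group G] (H K : Subgroup G)
    [(H.subgroupOf K).Normal] [IsCyclic K] : IsCyclic (K ⧸ H.subgroupOf K) :=
  isCyclic_of_surjective _ (QuotientGroup.mk'_surjective _)

theorem Subgroup.isCyclic_top_quotient_subgroupOf {G : Type*} [Group G] (N : Subgroup G)
    [N.Normal] [IsCyclic (G ⧸ N)] : IsCyclic ((⊤ : Subgroup G) ⧸ N.subgroupOf ⊤) :=
  isCyclic_of_surjective (QuotientGroup.map N _ Subgroup.topEquiv.symm.toMonoidHom fun _ => id) <|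
    QuotientGroup.map_surjective_of_surjective _ _ _
      (QuotientGroup.mk_surjective.comp Subgroup.topEquiv.symm.surjective) _

theorem IsSupersolvable.of_isCyclic_of_isCyclic_quotient {G : Type*} [Group G]
    (N : Subgroup G) [N.Normal] [IsCyclic N] [IsCyclic (G ⧸ N)] : IsSupersolvable G := by
  refine ⟨2, ![⊥, N, ⊤], fun i => by fin_cases i <;> dsimp <;> infer_instance,
    rfl, rfl, fun i => ?_⟩
  fin_cases i
  · exact ⟨bot_le, Subgroup.isCyclic_quotient_subgroupOf _ N⟩
  · exact ⟨le_top, Subgroup.isCyclic_top_quotient_subgroupOf N⟩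

theorem stmt_11 (G : Type) [Group G] [Finite G] (h : Squarefree (Nat.card G)) :
    IsSupersolvable G := by
  have := IsZGroup.of_squarefree h
  have := IsZGroup.isCyclic_commutator (G := G)
  -- `Abelianization G` is defined as `G ⧸ commutator G`
  have : IsCyclic (G ⧸ commutator G) := IsZGroup.isCyclic_abelianization
  exact .of_isCyclic_of_isCyclic_quotient (commutator G)
end

section
/- Every group of square-free order is metacyclic, i.e., it has a cyclic normal subgroup with cyclic quotient. -/
theorem stmt_12 (G : Type) [Group G] [Finite G] (h : Squarefree (Nat.card G)) :
    ∃ H : Subgroup G, ∃ hn : H.Normal, IsCyclic H ∧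
      (letI := hn; IsCyclic (G ⧸ H)) := by
  have := IsZGroup.of_squarefree h
  exact ⟨commutator G, inferInstance, IsZGroup.isCyclic_commutator G,
    IsZGroup.isCyclic_abelianization⟩
end
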